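/- Let K be an algebraically closed field of characteristic 0 and let g = g₁x + g₂x² + ⋯ ∈ A(K) (so g has constant coefficient 0 and g₁ ≠ 0), and assume g₁ is not a root of unity, i.e., g₁^m ≠ 1 for every integer m ≥ 1. Then for every integer n ≥ 1 and every c ∈ K with c^n = g₁, there exists a unique ω ∈ A(K) with linear coefficient c such that ω^[n] = g. In particular, g has a root of order n in A(K), and the map ω ↦ (linear coefficient of ω) is a bijection from the set of roots of order n of g in A(K) onto the set of n-th roots of g₁ in K. -/

import Mathlib

open PowerSeries Finset

/-- Composition `f ∘ g` of formal power series (substitution of `g` into `f`).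
This coefficientwise formula agrees with the usual substitution whenever the
constant coefficient of `g` is zero, since then `g ^ j` has order at least `j`. -/
noncomputable def psComp {Z : Type*} [CommRing Z] (f g : Z⟦X⟧) : Z⟦X⟧ :=
  PowerSeries.mk fun n => ∑ j ∈ Finset.range (n + 1), coeff j f * coeff n (g ^ j)

/-- The `m`-th compositional iterate: `ω^[0] = X` and `ω^[m+1] = ω ∘ ω^[m]`. -/
noncomputable def psIter {Z : Type*} [CommRing Z] (ω : Z⟦X⟧) : ℕ → Z⟦X⟧
  | 0 => PowerSeries.X
  | m + 1 => psComp ω (psIter ω m)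

/-!
If `ω` and `ω'` have the same linear coefficient `c` and agree below degree `k ≥ 2`, the `k`-th
coefficients of `ω^[n]` and `ω'^[n]` differ by `λₖ (ωₖ - ω'ₖ)` with
`λₖ = ∑_{i<n} (cᵏ)ⁱ c^(n-1-i)`, and `λₖ (cᵏ - c) = g₁ᵏ - g₁ = g₁ (g₁^(k-1) - 1) ≠ 0` because `g₁` is
not a root of unity. Hence the equation `ω^[n] = g` determines the coefficients of `ω` one at a
time, and can be solved for them recursively.
-/

section Composition

variable {R : Type*} [CommRing R]

@[simp]
lemma coeff_psComp (f g : R⟦X⟧) (k : ℕ) :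
    coeff k (psComp f g) = ∑ j ∈ range (k + 1), coeff j f * coeff k (g ^ j) :=
  coeff_mk _ _

lemma psIter_succ (ω : R⟦X⟧) (n : ℕ) : psIter ω (n + 1) = psComp ω (psIter ω n) := rfl

lemma constantCoeff_psComp (f g : R⟦X⟧) : constantCoeff (psComp f g) = constantCoeff f := by
  simp [← coeff_zero_eq_constantCoeff]

lemma coeff_one_psComp (f g : R⟦X⟧) : coeff 1 (psComp f g) = coeff 1 f * coeff 1 g := by
  simp [sum_range_succ, coeff_one]

lemma constantCoeff_psIter {ω : R⟦X⟧} (h : constantCoeff ω = 0) :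
    ∀ n, constantCoeff (psIter ω n) = 0
  | 0 => constantCoeff_X
  | n + 1 => by rw [psIter_succ, constantCoeff_psComp, h]

lemma coeff_one_psIter (ω : R⟦X⟧) (n : ℕ) : coeff 1 (psIter ω n) = coeff 1 ω ^ n := by
  induction n with
  | zero => simp [psIter]
  | succ n ih => rw [psIter_succ, coeff_one_psComp, ih, pow_succ']

lemma coeff_pow_eq_of_coeff_eq {f f' : R⟦X⟧} {k : ℕ} (h : ∀ i < k, coeff i f = coeff i f')
    (j : ℕ) {i : ℕ} (hi : i < k) : coeff i (f ^ j) = coeff i (f' ^ j) := by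
  have htrunc : trunc k f = trunc k f' := by
    ext i
    simp only [coeff_trunc]
    split_ifs with hi
    exacts [h i hi, rfl]
  rw [← coeff_coe_trunc_of_lt hi, ← trunc_trunc_pow, htrunc, trunc_trunc_pow,
    coeff_coe_trunc_of_lt hi]

lemma coeff_psComp_eq_of_coeff_eq {f f' τ τ' : R⟦X⟧} {k : ℕ}
    (hf : ∀ i < k, coeff i f = coeff i f') (hτ : ∀ i < k, coeff i τ = coeff i τ') :
    ∀ i < k, coeff i (psComp f τ) = coeff i (psComp f' τ') := by
  intro i hi
  simp only [coeff_psComp]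
  refine sum_congr rfl fun j hj => ?_
  rw [hf j (by rw [mem_range] at hj; omega), coeff_pow_eq_of_coeff_eq hτ j hi]

lemma coeff_psIter_eq_of_coeff_eq {ω ω' : R⟦X⟧} {k : ℕ} (h : ∀ i < k, coeff i ω = coeff i ω')
    (n : ℕ) : ∀ i < k, coeff i (psIter ω n) = coeff i (psIter ω' n) := by
  induction n with
  | zero => intro i _; rfl
  | succ n ih => exact coeff_psComp_eq_of_coeff_eq h ih

lemma coeff_self_pow_of_constantCoeff_eq_zero {τ : R⟦X⟧} (h : constantCoeff τ = 0) (k : ℕ) :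
    coeff k (τ ^ k) = coeff 1 τ ^ k := by
  obtain ⟨σ, rfl⟩ := X_dvd_iff.mpr h
  rw [mul_pow, coeff_X_pow_mul', if_pos le_rfl, Nat.sub_self, coeff_zero_eq_constantCoeff,
    map_pow, coeff_succ_X_mul, coeff_zero_eq_constantCoeff]

lemma coeff_pow_eq_of_coeff_eq_of_ne_one {τ τ' : R⟦X⟧} (h0 : constantCoeff τ = 0)
    (h0' : constantCoeff τ' = 0) {k : ℕ} (h : ∀ i < k, coeff i τ = coeff i τ') {j : ℕ}
    (hj : j ≠ 1) : coeff k (τ ^ j) = coeff k (τ' ^ j) := by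
  obtain rfl | hj : j = 0 ∨ 2 ≤ j := by omega
  · rfl
  obtain ⟨σ, rfl⟩ := X_dvd_iff.mpr h0
  obtain ⟨σ', rfl⟩ := X_dvd_iff.mpr h0'
  have hσ : ∀ i < k - 1, coeff i σ = coeff i σ' := fun i hi => by
    simpa only [coeff_succ_X_mul] using h (i + 1) (by omega)
  simp only [mul_pow, coeff_X_pow_mul']
  split_ifs
  · exact coeff_pow_eq_of_coeff_eq hσ j (by omega)
  · rfl


lemma coeff_psComp_sub_psComp {f f' τ τ' : R⟦X⟧} {k : ℕ} (hk : 2 ≤ k)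
    (hf : ∀ i < k, coeff i f = coeff i f') (hτ0 : constantCoeff τ = 0)
    (hτ : ∀ i < k, coeff i τ = coeff i τ') :
    coeff k (psComp f τ) - coeff k (psComp f' τ') =
      coeff 1 f * (coeff k τ - coeff k τ') + coeff 1 τ ^ k * (coeff k f - coeff k f') := by
  have hτ0' : constantCoeff τ' = 0 := by
    rw [← coeff_zero_eq_constantCoeff_apply, ← hτ 0 (by omega), coeff_zero_eq_constantCoeff_apply,
      hτ0]
  have hlow : ∑ j ∈ range k, coeff j f * coeff k (τ ^ j) -
      ∑ j ∈ range k, coeff j f' * coeff k (τ' ^ j) = coeff 1 f * (coeff k τ - coeff k τ') := by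
    rw [← sum_sub_distrib, sum_eq_single_of_mem 1 (by rw [mem_range]; omega)]
    · rw [hf 1 (by omega), pow_one, pow_one, mul_sub]
    · intro j hj hj1
      rw [hf j (mem_range.mp hj), coeff_pow_eq_of_coeff_eq_of_ne_one hτ0 hτ0' hτ hj1, sub_self]
  rw [coeff_psComp, coeff_psComp, sum_range_succ, sum_range_succ,
    coeff_self_pow_of_constantCoeff_eq_zero hτ0, coeff_self_pow_of_constantCoeff_eq_zero hτ0',
    ← hτ 1 (by omega), ← hlow]
  ring

theorem coeff_psIter_sub_psIter {ω ω' : R⟦X⟧} (h0 : constantCoeff ω = 0) {k : ℕ} (hk : 2 ≤ k)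
    (h : ∀ i < k, coeff i ω = coeff i ω') (n : ℕ) :
    coeff k (psIter ω n) - coeff k (psIter ω' n) =
      (∑ i ∈ range n, (coeff 1 ω ^ k) ^ i * coeff 1 ω ^ (n - 1 - i)) *
        (coeff k ω - coeff k ω') := by
  induction n with
  | zero => simp [psIter]
  | succ n ih =>
    rw [psIter_succ, psIter_succ, coeff_psComp_sub_psComp hk h (constantCoeff_psIter h0 n)
      (coeff_psIter_eq_of_coeff_eq h n), ih, coeff_one_psIter, Nat.add_sub_cancel,
      geom_sum₂_succ_eq]
    ring

end Composition

lemma geom_sum₂_pow_ne_zero {R : Type*} [CommRing R] [IsDomain R] {c : R} {n k : ℕ}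
    (hc : c ^ n ≠ 0) (h : (c ^ n) ^ (k - 1) ≠ 1) :
    ∑ i ∈ range n, (c ^ k) ^ i * c ^ (n - 1 - i) ≠ 0 := by
  intro hsum
  have key := geom_sum₂_mul (c ^ k) c n
  rw [hsum, zero_mul] at key
  obtain _ | k := k
  · simp at h
  have : c ^ n * ((c ^ n) ^ k - 1) = 0 := by linear_combination -key
  exact h (sub_eq_zero.mp ((mul_eq_zero.mp this).resolve_left hc))

section Triangular

variable {K : Type*} [Field K] (Φ : K⟦X⟧ → K⟦X⟧) (g : K⟦X⟧) (c : K) (μ : ℕ → K)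

/-- The coefficient in degree `k ≥ 2` is what `Φ`, applied to the truncation below `k`, lacks in
degree `k`, divided by `μ k`. -/
noncomputable def triangularSolution : ℕ → K
  | 0 => 0
  | 1 => c
  | k + 2 =>
    (coeff (k + 2) g -
      coeff (k + 2) (Φ (mk fun i => if _ : i < k + 2 then triangularSolution i else 0))) /
      μ (k + 2)

variable {Φ g c μ}
  (hΦ : ∀ ω ω' : K⟦X⟧, constantCoeff ω = 0 → coeff 1 ω = c → ∀ k, 2 ≤ k →
      (∀ i < k, coeff i ω = coeff i ω') →
        coeff k (Φ ω) - coeff k (Φ ω') = μ k * (coeff k ω - coeff k ω'))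
  (hμ : ∀ k, 2 ≤ k → μ k ≠ 0)
include hΦ hμ

theorem eq_of_apply_eq_of_coeff_sub_eq_mul {ω ω' : K⟦X⟧}
    (hω : constantCoeff ω = 0 ∧ coeff 1 ω = c) (hω' : constantCoeff ω' = 0 ∧ coeff 1 ω' = c)
    (h : Φ ω = Φ ω') : ω = ω' := by
  ext k
  induction k using Nat.strong_induction_on with
  | _ k ih =>
    obtain _ | _ | k := k
    · simp only [coeff_zero_eq_constantCoeff_apply, hω.1, hω'.1]
    · rw [hω.2, hω'.2]
    · have hdiff := hΦ ω ω' hω.1 hω.2 (k + 2) (by omega) ih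
      rw [h, sub_self, eq_comm, mul_eq_zero] at hdiff
      exact sub_eq_zero.mp (hdiff.resolve_left (hμ _ (by omega)))

theorem exists_apply_eq_of_coeff_sub_eq_mul
    (hΦ0 : ∀ ω, constantCoeff ω = 0 → coeff 1 ω = c → constantCoeff (Φ ω) = constantCoeff g)
    (hΦ1 : ∀ ω, constantCoeff ω = 0 → coeff 1 ω = c → coeff 1 (Φ ω) = coeff 1 g) :
    ∃ ω : K⟦X⟧, (constantCoeff ω = 0 ∧ coeff 1 ω = c) ∧ Φ ω = g := by
  set a := triangularSolution Φ g c μ with ha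
  have h0 : constantCoeff (mk a) = 0 := by
    rw [← coeff_zero_eq_constantCoeff_apply, coeff_mk, ha, triangularSolution]
  have h1 : coeff 1 (mk a) = c := by rw [coeff_mk, ha, triangularSolution]
  refine ⟨mk a, ⟨h0, h1⟩, ?_⟩
  ext k
  obtain _ | _ | k := k
  · simpa only [coeff_zero_eq_constantCoeff_apply] using hΦ0 _ h0 h1
  · exact hΦ1 _ h0 h1
  · set ω' : K⟦X⟧ := mk fun i => if _ : i < k + 2 then a i else 0
    have hdiff := hΦ (mk a) ω' h0 h1 (k + 2) (by omega) fun i hi => by simp [ω', hi]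
    rw [show coeff (k + 2) ω' = 0 by simp [ω'], sub_zero, coeff_mk, ha, triangularSolution,
      mul_div_cancel₀ _ (hμ _ (by omega))] at hdiff
    linear_combination hdiff

theorem existsUnique_apply_eq_of_coeff_sub_eq_mul
    (hΦ0 : ∀ ω, constantCoeff ω = 0 → coeff 1 ω = c → constantCoeff (Φ ω) = constantCoeff g)
    (hΦ1 : ∀ ω, constantCoeff ω = 0 → coeff 1 ω = c → coeff 1 (Φ ω) = coeff 1 g) :
    ∃! ω : K⟦X⟧, (constantCoeff ω = 0 ∧ coeff 1 ω = c) ∧ Φ ω = g := by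
  obtain ⟨ω, hω, hΦω⟩ := exists_apply_eq_of_coeff_sub_eq_mul hΦ hμ hΦ0 hΦ1
  exact ⟨ω, ⟨hω, hΦω⟩, fun ω' ⟨hω', hΦω'⟩ =>
    eq_of_apply_eq_of_coeff_sub_eq_mul hΦ hμ hω' hω (hΦω'.trans hΦω.symm)⟩

end Triangular

theorem roots_in_A_not_root_of_unity_general {K : Type*} [Field K]
    (g : K⟦X⟧) (hg0 : constantCoeff g = 0) (hg1 : coeff 1 g ≠ 0)
    (hnru : ∀ m : ℕ, 1 ≤ m → (coeff 1 g) ^ m ≠ 1)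
    (n : ℕ) (c : K) (hc : c ^ n = coeff 1 g) :
    ∃! ω : K⟦X⟧, (constantCoeff ω = 0 ∧ coeff 1 ω = c) ∧ psIter ω n = g := by
  refine existsUnique_apply_eq_of_coeff_sub_eq_mul (Φ := (psIter · n))
    (μ := fun k => ∑ i ∈ range n, (c ^ k) ^ i * c ^ (n - 1 - i)) ?_ ?_ ?_ ?_
  · rintro ω ω' h0 rfl k hk h
    exact coeff_psIter_sub_psIter h0 hk h n
  · intro k hk
    exact geom_sum₂_pow_ne_zero (hc ▸ hg1) (hc ▸ hnru (k - 1) (by omega))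
  · intro ω h0 _
    rw [constantCoeff_psIter h0, hg0]
  · rintro ω - rfl
    rw [coeff_one_psIter, hc]

/-- let `K` be an algebraically closed field of characteristic 0 and let
`g ∈ 𝒜(K)` (so `g(0) = 0`, `g₁ ≠ 0`) with `g₁` not a root of unity. Then for every `n ≥ 1`
and every `c ∈ K` with `c^n = g₁` there is a unique `ω ∈ 𝒜(K)` with linear coefficient `c`
and `ω^[n] = g`; in particular `g` has roots of every order `n` in `𝒜(K)`, and taking the
linear coefficient is a bijection from the order-`n` roots of `g` onto the `n`-th roots of
`g₁` in `K`. -/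
theorem roots_in_A_not_root_of_unity {K : Type*} [Field K] [IsAlgClosed K] [CharZero K]
    (g : K⟦X⟧) (hg0 : constantCoeff g = 0) (hg1 : coeff 1 g ≠ 0)
    (hnru : ∀ m : ℕ, 1 ≤ m → (coeff 1 g) ^ m ≠ 1)
    (n : ℕ) (hn : 1 ≤ n) (c : K) (hc : c ^ n = coeff 1 g) :
    ∃! ω : K⟦X⟧, (constantCoeff ω = 0 ∧ coeff 1 ω = c) ∧ psIter ω n = g :=
  roots_in_A_not_root_of_unity_general g hg0 hg1 hnru n c hc
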